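/- Let (X,d) be a proper geodesic metric space, Ω ⊊ X a bounded domain, and u : Ω → ℝ bounded below satisfying comparison with cones from below in Ω. Then the function x ↦ |∇⁻u|(x) (the subslope of u) is upper semicontinuous on Ω. -/
import Mathlib


open Metric Filter Set Topology

/-- A geodesic space: any two points are joined by an isometric copy of an interval. -/
def IsGeodesicSpace (X : Type*) [MetricSpace X] : Prop :=
  ∀ x y : X, ∃ γ : ℝ → X, γ 0 = x ∧ γ (dist x y) = y ∧ ∀ s t : ℝ, dist (γ s) (γ t) = |s - t|

/-- The subslope `|∇⁻ u|(x) = limsup_{y→x} max{u(x)-u(y),0}/d(x,y)`. -/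
noncomputable def mSubslope {X : Type*} [MetricSpace X] (u : X → ℝ) (x : X) : ℝ :=
  Filter.limsup (fun y => max (u x - u y) 0 / dist x y) (𝓝[≠] x)

/-- The slope `|∇ u|(x) = limsup_{y→x} |u(y)-u(x)|/d(x,y)`. -/
noncomputable def mSlope {X : Type*} [MetricSpace X] (u : X → ℝ) (x : X) : ℝ :=
  Filter.limsup (fun y => |u y - u x| / dist x y) (𝓝[≠] x)

/-- Comparison with cones from below in `Ω`: for every open `O` compactly contained in `Ω`,
apex `xhat ∈ Ω \ O`, `a ∈ ℝ`, `κ ≤ 0`, if `u ≥ a + κ d(xhat,·)` on `∂O` then the same holds on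
the closure of `O`. -/
def CompCones {X : Type*} [MetricSpace X] (Ω : Set X) (u : X → ℝ) : Prop :=
  ∀ O : Set X, IsOpen O → IsCompact (closure O) → closure O ⊆ Ω →
    ∀ xhat ∈ Ω \ O, ∀ a κ : ℝ, κ ≤ 0 →
      (∀ z ∈ frontier O, a + κ * dist xhat z ≤ u z) →
      ∀ z ∈ closure O, a + κ * dist xhat z ≤ u z

/-- Locally Lipschitz on a set. -/
def LocLipOn {X : Type*} [MetricSpace X] (s : Set X) (u : X → ℝ) : Prop :=
  ∀ x ∈ s, ∃ K : NNReal, ∃ t ∈ 𝓝[s] x, LipschitzOnWith K u t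

/-- Key consequence of comparison with cones from below: the cone through the values of `u`
on the sphere of radius `ρ` around `x` bounds `u` from below inside the ball. -/
private lemma coneA {X : Type*} [MetricSpace X] [ProperSpace X] {Ω : Set X} {u : X → ℝ}
    (hcc : CompCones Ω u) {x : X} {ρ b : ℝ} (hx : x ∈ Ω) (hρ : 0 < ρ)
    (hball : closedBall x ρ ⊆ Ω) (hb : ∀ z ∈ sphere x ρ, b ≤ u z) :
    ∀ y ∈ ball x ρ, u x - max (u x - b) 0 / ρ * dist x y ≤ u y := by
  set κ : ℝ := -(max (u x - b) 0 / ρ) with hκdef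
  have hκ : κ ≤ 0 := neg_nonpos.mpr (div_nonneg (le_max_right _ _) hρ.le)
  set O : Set X := ball x ρ \ {x} with hO
  have hOopen : IsOpen O := isOpen_ball.sdiff isClosed_singleton
  have hOc : closure O ⊆ closedBall x ρ :=
    (closure_mono diff_subset).trans closure_ball_subset_closedBall
  have hcomp : IsCompact (closure O) :=
    (isCompact_closedBall x ρ).of_isClosed_subset isClosed_closure hOc
  have key : ∀ z ∈ closure O, u x + κ * dist x z ≤ u z := by
    apply hcc O hOopen hcomp (hOc.trans hball) x ⟨hx, fun h => h.2 rfl⟩ (u x) κ hκ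
    intro z hz
    rw [hOopen.frontier_eq] at hz
    rcases eq_or_ne z x with rfl | hne
    · simp
    · have hzd : dist z x = ρ :=
        le_antisymm (hOc hz.1) (not_lt.mp fun h => hz.2 ⟨h, hne⟩)
      have hbz : b ≤ u z := hb z hzd
      have h1 : dist x z = ρ := by rw [dist_comm]; exact hzd
      have h2 : κ * ρ = -(max (u x - b) 0) := by
        rw [hκdef, neg_mul, div_mul_cancel₀ _ hρ.ne']
      have h3 : u x - b ≤ max (u x - b) 0 := le_max_left _ _
      rw [h1]
      linarith
  intro y hy
  rcases eq_or_ne y x with rfl | hne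
  · simp
  · have h := key y (subset_closure ⟨hy, hne⟩)
    rw [hκdef] at h
    linarith

/-- In a geodesic space with at least two points, no point is isolated. -/
private lemma geo_nebot {X : Type*} [MetricSpace X] (hgeo : IsGeodesicSpace X)
    (h2 : ∃ a b : X, a ≠ b) (x : X) : (𝓝[≠] x).NeBot := by
  obtain ⟨a, b, hab⟩ := h2
  obtain ⟨y, hy⟩ : ∃ y : X, y ≠ x := by
    rcases eq_or_ne a x with rfl | h
    · exact ⟨b, Ne.symm hab⟩
    · exact ⟨a, h⟩
  obtain ⟨γ, hγ0, -, hγd⟩ := hgeo x y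
  rw [← mem_closure_iff_nhdsWithin_neBot]
  rw [Metric.mem_closure_iff]
  intro ε hε
  refine ⟨γ (ε / 2), ?_, ?_⟩
  · intro h
    have hd : dist (γ 0) (γ (ε / 2)) = ε / 2 := by
      rw [hγd]; rw [abs_of_nonpos (by linarith)]; ring
    rw [hγ0] at hd
    rw [Set.mem_singleton_iff] at h
    rw [h, dist_self] at hd
    linarith
  · have hd : dist x (γ (ε / 2)) = ε / 2 := by
      rw [← hγ0, hγd, abs_of_nonpos (by linarith)]; ring
    rw [hd]; linarith

/-- A pointwise bound on the difference quotients near `x` bounds the subslope. -/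
private lemma subslope_le {X : Type*} [MetricSpace X] {u : X → ℝ} {x : X} {C ρ : ℝ}
    (hne : (𝓝[≠] x).NeBot) (hρ : 0 < ρ)
    (h : ∀ y, y ∈ ball x ρ → y ≠ x → max (u x - u y) 0 / dist x y ≤ C) :
    mSubslope u x ≤ C := by
  have hev : ∀ᶠ y in 𝓝[≠] x, max (u x - u y) 0 / dist x y ≤ C := by
    rw [eventually_nhdsWithin_iff]
    filter_upwards [Metric.ball_mem_nhds x hρ] with y hy hyx
    exact h y hy hyx
  refine Filter.limsup_le_of_le ?_ hev
  exact isCoboundedUnder_le_of_le _ fun y => div_nonneg (le_max_right _ _) dist_nonneg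

set_option maxHeartbeats 2000000 in
theorem stmt2 {X : Type*} [MetricSpace X] [ProperSpace X] (hgeo : IsGeodesicSpace X)
    (Ω : Set X) (hΩo : IsOpen Ω) (hΩc : IsConnected Ω) (hΩb : Bornology.IsBounded Ω)
    (hΩne : Ω ≠ Set.univ)
    (u : X → ℝ) (hbdd : BddBelow (u '' Ω)) (hcc : CompCones Ω u) :
    UpperSemicontinuousOn (mSubslope u) Ω := by
  -- two distinct points in X
  obtain ⟨x₁, hx₁⟩ := hΩc.nonempty
  obtain ⟨x₂, hx₂⟩ := (Set.ne_univ_iff_exists_notMem Ω).mp hΩne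
  have h2 : ∃ a b : X, a ≠ b := ⟨x₁, x₂, fun h => hx₂ (h ▸ hx₁)⟩
  have hnb : ∀ x : X, (𝓝[≠] x).NeBot := geo_nebot hgeo h2
  -- lower bound for u on Ω
  obtain ⟨c, hc⟩ := hbdd
  have hcΩ : ∀ z ∈ Ω, c ≤ u z := fun z hz => hc (Set.mem_image_of_mem u hz)
  intro x₀ hx₀
  -- a radius with closedBall x₀ (3R) ⊆ Ω
  obtain ⟨R3, hR3pos, hR3⟩ : ∃ r > 0, closedBall x₀ r ⊆ Ω := by
    obtain ⟨r, hr, hball⟩ := Metric.isOpen_iff.mp hΩo x₀ hx₀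
    exact ⟨r / 2, by linarith, (closedBall_subset_ball (by linarith)).trans hball⟩
  set R : ℝ := R3 / 3 with hRdef
  have hRpos : 0 < R := by positivity
  have hR : closedBall x₀ (3 * R) ⊆ Ω := by
    rw [hRdef]; rw [show 3 * (R3 / 3) = R3 by ring]; exact hR3
  -- local upper bound for u
  set M : ℝ := max c (2 * u x₀ - c) with hMdef
  have hub : ∀ p ∈ closedBall x₀ R, u p ≤ M := by
    intro p hp
    have hpΩ : p ∈ Ω := hR (closedBall_subset_closedBall (by linarith) hp)
    have hsub : closedBall p (2 * R) ⊆ Ω := by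
      refine (closedBall_subset_closedBall' ?_).trans hR
      rw [mem_closedBall] at hp; linarith
    have hcone := coneA hcc hpΩ (by linarith : (0:ℝ) < 2 * R) hsub
      (fun z hz => hcΩ z (hsub (sphere_subset_closedBall hz)))
    have hx₀ball : x₀ ∈ ball p (2 * R) := by
      rw [mem_ball, dist_comm]
      rw [mem_closedBall] at hp; linarith
    have := hcone x₀ hx₀ball
    have hdle : dist p x₀ ≤ R := mem_closedBall.mp hp
    rcases le_or_gt (u p) c with h | h
    · rw [hMdef]; exact h.trans (le_max_left _ _)
    · have hmax : max (u p - c) 0 = u p - c := max_eq_left (by linarith)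
      rw [hmax] at this
      have hstep : u p - (u p - c) / (2 * R) * R ≤ u x₀ := by
        have h1 : (u p - c) / (2 * R) * dist p x₀ ≤ (u p - c) / (2 * R) * R :=
          mul_le_mul_of_nonneg_left hdle (div_nonneg (by linarith) (by linarith))
        linarith
      have h2 : (u p - c) / (2 * R) * R = (u p - c) / 2 := by
        field_simp
      rw [h2] at hstep
      have : u p ≤ 2 * u x₀ - c := by linarith
      rw [hMdef]; exact this.trans (le_max_right _ _)
  -- local Lipschitz-type lower cone bound
  set K : ℝ := max (M - c) 0 / (R / 2) with hKdef
  have hK0 : 0 ≤ K := div_nonneg (le_max_right _ _) (by linarith)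
  have hlip : ∀ x ∈ ball x₀ (R / 2), ∀ y ∈ ball x (R / 2), u x - K * dist x y ≤ u y := by
    intro x hx y hy
    have hxcb : x ∈ closedBall x₀ R := by
      rw [mem_ball] at hx; rw [mem_closedBall]; linarith
    have hxΩ : x ∈ Ω := hR (closedBall_subset_closedBall (by linarith) hxcb)
    have hsub : closedBall x (R / 2) ⊆ Ω := by
      refine (closedBall_subset_closedBall' ?_).trans hR
      rw [mem_ball] at hx; linarith
    have hcone := coneA hcc hxΩ (by linarith : (0:ℝ) < R / 2) hsub
      (fun z hz => hcΩ z (hsub (sphere_subset_closedBall hz)))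
    have := hcone y hy
    have hxM : u x ≤ M := hub x hxcb
    have hmono : max (u x - c) 0 / (R / 2) ≤ K := by
      rw [hKdef]
      apply div_le_div_of_nonneg_right ?_ (by linarith)
      exact max_le_max (by linarith) le_rfl

    have hd0 : 0 ≤ dist x y := dist_nonneg
    have : max (u x - c) 0 / (R / 2) * dist x y ≤ K * dist x y :=
      mul_le_mul_of_nonneg_right hmono hd0
    linarith [hcone y hy]
  -- boundedness of the difference quotient at x₀
  have hbound : IsBoundedUnder (· ≤ ·) (𝓝[≠] x₀)
      (fun y => max (u x₀ - u y) 0 / dist x₀ y) := by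
    refine ⟨K, eventually_map.mpr ?_⟩
    rw [eventually_nhdsWithin_iff]
    filter_upwards [Metric.ball_mem_nhds x₀ (by linarith : (0:ℝ) < R / 2)] with y hy hyx
    have hlb := hlip x₀ (mem_ball_self (by linarith)) y hy
    have hdy : 0 < dist x₀ y := dist_pos.mpr (fun h => hyx h.symm)
    rw [div_le_iff₀ hdy]
    refine max_le (by linarith) (by positivity)
  set L : ℝ := mSubslope u x₀ with hLdef
  intro t ht
  set ε : ℝ := t - L with hεdef
  have hεpos : 0 < ε := by simp only [hεdef]; linarith
  have hL0 : 0 ≤ L := by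
    rw [hLdef]
    refine Filter.le_limsup_of_frequently_le ?_ hbound
    exact Filter.Eventually.frequently (Eventually.of_forall
      (fun y => div_nonneg (le_max_right _ _) dist_nonneg))
  -- step 1 : a radius on which the difference quotients at x₀ are < L + ε/2
  have hev : ∀ᶠ y in 𝓝[≠] x₀, max (u x₀ - u y) 0 / dist x₀ y < L + ε / 2 := by
    refine Filter.eventually_lt_of_limsup_lt ?_ hbound
    show mSubslope u x₀ < L + ε / 2
    linarith
  rw [eventually_nhdsWithin_iff, Metric.eventually_nhds_iff] at hev
  obtain ⟨r₀', hr₀'pos, hr₀'⟩ := hev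
  set r₀ : ℝ := min r₀' (R / 2) with hr₀def
  have hr₀pos : 0 < r₀ := lt_min hr₀'pos (by linarith)
  have hr₀R : r₀ ≤ R / 2 := min_le_right _ _
  have hstep1 : ∀ y, dist x₀ y < r₀ → u x₀ - (L + ε / 2) * dist x₀ y ≤ u y := by
    intro y hy
    rcases eq_or_ne y x₀ with rfl | hne
    · simp
    · have h1 : dist y x₀ < r₀' := by rw [dist_comm]; exact hy.trans_le (min_le_left _ _)
      have h2 := hr₀' h1 hne
      have hdy : 0 < dist x₀ y := dist_pos.mpr (fun h => hne h.symm)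
      rw [div_lt_iff₀ hdy] at h2
      have h3 : u x₀ - u y ≤ max (u x₀ - u y) 0 := le_max_left _ _
      nlinarith
  set r : ℝ := r₀ / 2 with hrdef
  have hrpos : 0 < r := by positivity
  set δ : ℝ := min (r / 2) ((ε * r / 2) / (K + L + ε + 1)) with hδdef
  have hS : 0 < K + L + ε + 1 := by linarith
  have hδpos : 0 < δ := lt_min (by linarith) (by positivity)
  have hδr : δ ≤ r / 2 := min_le_left _ _
  have hδ2 : δ * (K + L + ε + 1) ≤ ε * r / 2 := by
    have := min_le_right (r / 2) ((ε * r / 2) / (K + L + ε + 1))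
    rw [← hδdef] at this
    calc δ * (K + L + ε + 1) ≤ (ε * r / 2) / (K + L + ε + 1) * (K + L + ε + 1) :=
          mul_le_mul_of_nonneg_right this hS.le
      _ = ε * r / 2 := div_mul_cancel₀ _ hS.ne'
  -- main estimate
  have hmain : ∀ x ∈ ball x₀ δ, mSubslope u x < t := by
    intro x hx
    rw [mem_ball, dist_comm] at hx
    set d : ℝ := dist x₀ x with hddef
    have hd0 : 0 ≤ d := dist_nonneg
    have hdδ : d < δ := hx
    set ρ : ℝ := r - d with hρdef
    have hρpos : 0 < ρ := by
      simp only [hρdef]; have : d < r / 2 := lt_of_lt_of_le hdδ hδr; linarith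
    have hxball : x ∈ ball x₀ (R / 2) := by
      rw [mem_ball, dist_comm, ← hddef]
      have : r ≤ R / 2 := by rw [hrdef]; linarith
      linarith [lt_of_lt_of_le hdδ hδr]
    have hxΩ : x ∈ Ω := hR (closedBall_subset_closedBall (by linarith) (ball_subset_closedBall hxball))
    have hsub : closedBall x ρ ⊆ Ω := by
      have h1 : closedBall x ρ ⊆ closedBall x₀ r := by
        apply closedBall_subset_closedBall'
        rw [dist_comm, ← hddef, hρdef]; linarith
      refine h1.trans ((closedBall_subset_closedBall ?_).trans hR)
      rw [hrdef]; linarith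
    set b : ℝ := u x₀ - (L + ε / 2) * r with hbdef
    have hsphere : ∀ z ∈ sphere x ρ, b ≤ u z := by
      intro z hz
      rw [mem_sphere] at hz
      have hxz : dist x z = ρ := by rw [dist_comm]; exact hz
      have hdz : dist x₀ z ≤ r := by
        calc dist x₀ z ≤ dist x₀ x + dist x z := dist_triangle _ _ _
          _ = d + ρ := by rw [hxz, ← hddef]
          _ = r := by rw [hρdef]; ring
      have hdz' : dist x₀ z < r₀ := lt_of_le_of_lt hdz (by rw [hrdef]; linarith)
      have h1 := hstep1 z hdz'
      have h2 : (L + ε / 2) * dist x₀ z ≤ (L + ε / 2) * r :=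
        mul_le_mul_of_nonneg_left hdz (by linarith)
      rw [hbdef]; linarith
    have hcone := coneA hcc hxΩ hρpos hsub hsphere
    set C : ℝ := max (u x - b) 0 / ρ with hCdef
    have hC0 : 0 ≤ C := div_nonneg (le_max_right _ _) hρpos.le
    have hslope : mSubslope u x ≤ C := by
      refine subslope_le (hnb x) hρpos ?_
      intro y hy hyx
      have h1 := hcone y hy
      have hdy : 0 < dist x y := dist_pos.mpr (fun h => hyx h.symm)
      rw [div_le_iff₀ hdy]
      refine max_le (by linarith) (by positivity)
    -- now estimate C
    have hux : u x - u x₀ ≤ K * d := by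
      have hx₀ball : x₀ ∈ ball x (R / 2) := by
        rw [mem_ball, ← hddef]
        have : r ≤ R / 2 := by rw [hrdef]; linarith
        linarith [lt_of_lt_of_le hdδ hδr]
      have := hlip x hxball x₀ hx₀ball
      rw [dist_comm, ← hddef] at this
      linarith
    have hN' : 0 ≤ K * δ + (L + ε / 2) * r := by positivity
    have h1 : max (u x - b) 0 ≤ K * δ + (L + ε / 2) * r := by
      refine max_le ?_ hN'
      have : K * d ≤ K * δ := mul_le_mul_of_nonneg_left hdδ.le hK0
      rw [hbdef]; linarith
    have hrδ : 0 < r - δ := by linarith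
    have hρge : r - δ ≤ ρ := by rw [hρdef]; linarith
    have h2 : C ≤ (K * δ + (L + ε / 2) * r) / (r - δ) := by
      rw [hCdef]
      exact div_le_div₀ hN' h1 hrδ hρge
    have h3 : (K * δ + (L + ε / 2) * r) / (r - δ) < t := by
      rw [div_lt_iff₀ hrδ]
      have ht' : t = L + ε := by rw [hεdef]; ring
      rw [ht']
      nlinarith
    linarith
  have : ∀ᶠ x in 𝓝[Ω] x₀, mSubslope u x < t := by
    apply Filter.Eventually.filter_mono nhdsWithin_le_nhds
    filter_upwards [Metric.ball_mem_nhds x₀ hδpos] with x hx using hmain x hx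
  exact this
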